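/- arXiv:math/0311220 — 4 statements merged into one kernel-verified Lean document; each statement's English description precedes it below -/
import Mathlib

section
/- For all positive integers a, b, c, the double product form of MacMahon's formula equals the hyperfactorial form: ∏_{i=1}^{a} ∏_{j=1}^{b} ∏_{k=1}^{c} (i+j+k-1)/(i+j+k-2) = H(a+b+c)·H(a)·H(b)·H(c) / (H(a+b)·H(b+c)·H(c+a)), where H(p) = ∏_{j=1}^{p-1} j! is the hyperfactorial. -/
/-- The hyperfactorial `H(p) = (p-1)! (p-2)! ⋯ 1! = ∏_{j=0}^{p-1} j!`. -/
def hyperfactorial (p : ℕ) : ℕ := ∏ j ∈ Finset.range p, Nat.factorial j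

lemma hyperfactorial_pos (p : ℕ) : 0 < hyperfactorial p :=
  Finset.prod_pos fun _ _ => Nat.factorial_pos _

lemma hyperfactorial_succ (p : ℕ) :
    hyperfactorial (p + 1) = hyperfactorial p * Nat.factorial p :=
  Finset.prod_range_succ _ _

lemma tel (g : ℕ → ℚ) (hg : ∀ n, g n ≠ 0) (b : ℕ) :
    ∏ j ∈ Finset.Icc 1 b, g j / g (j - 1) = g b / g 0 := by
  induction b with
  | zero => simpa using (div_self (hg 0)).symm
  | succ n ih =>
    rw [Finset.prod_Icc_succ_top (by omega), ih]
    simp only [Nat.add_sub_cancel]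
    rw [div_mul_div_comm, mul_comm (g 0) (g n), ← mul_div_mul_left (g (n+1)) (g 0) (hg n)]

lemma asc (m a : ℕ) :
    ∏ i ∈ Finset.Icc 1 a, ((i : ℚ) + m) =
      (Nat.factorial (a + m) : ℚ) / Nat.factorial m := by
  induction a with
  | zero =>
    simpa using (div_self (Nat.cast_ne_zero.2 (Nat.factorial_ne_zero m) : (Nat.factorial m:ℚ) ≠ 0)).symm
  | succ n ih =>
    rw [Finset.prod_Icc_succ_top (by omega), ih,
      show n + 1 + m = (n + m) + 1 from by omega, Nat.factorial_succ]
    have h : (Nat.factorial m : ℚ) ≠ 0 := Nat.cast_ne_zero.2 (Nat.factorial_ne_zero m)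
    field_simp
    push_cast
    ring

lemma aux (a b c : ℕ) :
    (∏ i ∈ Finset.Icc 1 a, ∏ j ∈ Finset.Icc 1 b, ∏ k ∈ Finset.Icc 1 c,
        (((i : ℚ) + j + k - 1) / ((i : ℚ) + j + k - 2))) =
      ((hyperfactorial (a + b + c) : ℚ) * hyperfactorial a * hyperfactorial b *
          hyperfactorial c) /
        ((hyperfactorial (a + b) : ℚ) * hyperfactorial (b + c) * hyperfactorial (c + a)) := by
  have Hne : ∀ p : ℕ, (hyperfactorial p : ℚ) ≠ 0 := fun p =>
    Nat.cast_ne_zero.2 (hyperfactorial_pos p).ne'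
  have Fne : ∀ p : ℕ, (Nat.factorial p : ℚ) ≠ 0 := fun p =>
    Nat.cast_ne_zero.2 (Nat.factorial_ne_zero p)
  induction c with
  | zero =>
    simp only [Nat.add_zero, Nat.zero_add, Finset.Icc_eq_empty (by omega : ¬ (1:ℕ) ≤ 0),
      Finset.prod_empty, Finset.prod_const_one]
    rw [show hyperfactorial 0 = 1 from rfl, Nat.cast_one, mul_one, eq_comm,
      div_eq_one_iff_eq (mul_ne_zero (mul_ne_zero (Hne _) (Hne _)) (Hne _))]
    ring
  | succ c ih =>
    -- peel off k = c+1
    have hpeel : ∀ i j : ℕ,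
        (∏ k ∈ Finset.Icc 1 (c+1), (((i : ℚ) + j + k - 1) / ((i : ℚ) + j + k - 2))) =
        (∏ k ∈ Finset.Icc 1 c, (((i : ℚ) + j + k - 1) / ((i : ℚ) + j + k - 2))) *
          (((i : ℚ) + j + (c+1 : ℕ) - 1) / ((i : ℚ) + j + (c+1 : ℕ) - 2)) := fun i j =>
      Finset.prod_Icc_succ_top (by omega) _
    simp only [hpeel, Finset.prod_mul_distrib]
    rw [ih]
    -- the extra double product
    have hextra : (∏ i ∈ Finset.Icc 1 a, ∏ j ∈ Finset.Icc 1 b,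
        (((i : ℚ) + j + (c+1 : ℕ) - 1) / ((i : ℚ) + j + (c+1 : ℕ) - 2))) =
        ((Nat.factorial (a + (b + c)) : ℚ) / Nat.factorial (b + c)) /
          ((Nat.factorial (a + c) : ℚ) / Nat.factorial c) := by
      have hin : ∀ i ∈ Finset.Icc 1 a, (∏ j ∈ Finset.Icc 1 b,
          (((i : ℚ) + j + (c+1 : ℕ) - 1) / ((i : ℚ) + j + (c+1 : ℕ) - 2))) =
          ((i : ℚ) + (b + c : ℕ)) / ((i : ℚ) + (c : ℕ)) := by
        intro i hi
        have hi1 : (1 : ℕ) ≤ i := (Finset.mem_Icc.1 hi).1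
        have hiq : (1 : ℚ) ≤ (i : ℚ) := by exact_mod_cast hi1
        set g : ℕ → ℚ := fun n => (i : ℚ) + n + c with hg
        have hgne : ∀ n, g n ≠ 0 := by
          intro n
          have : (0 : ℚ) < (i : ℚ) + n + c := by positivity
          simp [hg]; nlinarith
        have : (∏ j ∈ Finset.Icc 1 b,
            (((i : ℚ) + j + (c+1 : ℕ) - 1) / ((i : ℚ) + j + (c+1 : ℕ) - 2))) =
            ∏ j ∈ Finset.Icc 1 b, g j / g (j - 1) := by
          refine Finset.prod_congr rfl fun j hj => ?_
          have hj1 : (1 : ℕ) ≤ j := (Finset.mem_Icc.1 hj).1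
          have hcast : ((j - 1 : ℕ) : ℚ) = (j : ℚ) - 1 := by
            push_cast [hj1]; ring
          simp only [hg, hcast]
          push_cast
          ring_nf
        rw [this, tel g hgne b]
        simp only [hg]
        push_cast
        ring_nf
      rw [Finset.prod_congr rfl hin, Finset.prod_div_distrib, asc (b + c) a, asc c a]
    rw [hextra,
      show a + b + (c + 1) = (a + b + c) + 1 from by omega,
      show b + (c + 1) = (b + c) + 1 from by omega,
      show c + 1 + a = (c + a) + 1 from by omega,
      show a + (b + c) = a + b + c from by omega,
      hyperfactorial_succ, hyperfactorial_succ, hyperfactorial_succ, hyperfactorial_succ]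
    push_cast
    field_simp [Hne, Fne]
    ring

/-- MacMahon's formula: the double product form equals the hyperfactorial form. -/
theorem macmahon_product_eq_hyperfactorial (a b c : ℕ)
    (ha : 0 < a) (hb : 0 < b) (hc : 0 < c) :
    (∏ i ∈ Finset.Icc 1 a, ∏ j ∈ Finset.Icc 1 b, ∏ k ∈ Finset.Icc 1 c,
        (((i : ℚ) + j + k - 1) / ((i : ℚ) + j + k - 2))) =
      ((hyperfactorial (a + b + c) : ℚ) * hyperfactorial a * hyperfactorial b *
          hyperfactorial c) /
        ((hyperfactorial (a + b) : ℚ) * hyperfactorial (b + c) * hyperfactorial (c + a)) :=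
  aux a b c
end

section
/- For all positive integers a, b, c with n = a+b+c, the quotient of products of binomial coefficients ∏_{m=1}^{b} C(n-m, a) / ∏_{m=1}^{b} C(a+b-m, a) equals ∏_{i=1}^{a} ∏_{j=1}^{b} ∏_{k=1}^{c} (i+j+k-1)/(i+j+k-2). -/
open Finset

private lemma tel_prod (x : ℚ) (hx : 1 ≤ x) (n : ℕ) :
    ∏ k ∈ Icc 1 n, (x + k) / (x + k - 1) = (x + n) / x := by
  induction n with
  | zero =>
    simp [div_self (show x ≠ 0 by linarith)]
  | succ n ih =>
    rw [Finset.prod_Icc_succ_top (by omega), ih]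
    have h0 : (0:ℚ) ≤ (n:ℚ) := Nat.cast_nonneg n
    have h1 : x ≠ 0 := by linarith
    have h2 : x + n ≠ 0 := by linarith
    have hcast : ((n+1:ℕ):ℚ) = (n:ℚ) + 1 := by push_cast; ring
    rw [hcast, show x + ((n:ℚ)+1) - 1 = x + n by ring]
    field_simp

private lemma step_prod (a b c : ℕ) (ha : 0 < a) (hb : 0 < b) :
    ∏ m ∈ Icc 1 b, (((a:ℚ) + b + c - m + 1) / ((b:ℚ) + c - m + 1)) =
    ∏ i ∈ Icc 1 a, ∏ j ∈ Icc 1 b, (((i:ℚ) + j + c) / ((i:ℚ) + j + c - 1)) := by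
  rw [Finset.prod_comm]
  have hR : ∀ j ∈ Icc 1 b,
      (∏ i ∈ Icc 1 a, (((i:ℚ) + j + c) / ((i:ℚ) + j + c - 1)))
        = (((j:ℚ) + c) + a) / ((j:ℚ) + c) := by
    intro j hj
    have hj1 : 1 ≤ j := (mem_Icc.mp hj).1
    have hx : (1:ℚ) ≤ (j:ℚ) + c := by
      have : (1:ℚ) ≤ (j:ℚ) := by exact_mod_cast hj1
      have : (0:ℚ) ≤ (c:ℚ) := Nat.cast_nonneg c
      linarith
    rw [← tel_prod ((j:ℚ) + c) hx a]
    apply Finset.prod_congr rfl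
    intro i _
    ring_nf
  rw [Finset.prod_congr rfl hR]
  apply Finset.prod_nbij' (fun m => b + 1 - m) (fun j => b + 1 - j)
  · intro m hm; simp only [mem_Icc] at *; omega
  · intro m hm; simp only [mem_Icc] at *; omega
  · intro m hm; simp only [mem_Icc] at *; omega
  · intro m hm; simp only [mem_Icc] at *; omega
  · intro m hm
    simp only [mem_Icc] at hm
    have hcast : ((b + 1 - m : ℕ) : ℚ) = (b:ℚ) + 1 - m := by
      have : m ≤ b + 1 := by omega
      push_cast [Nat.cast_sub this]
      ring
    rw [hcast]
    ring

private lemma aux_main (a b : ℕ) (ha : 0 < a) (hb : 0 < b) (c : ℕ) :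
    (∏ m ∈ Finset.Icc 1 b, (Nat.choose (a + b + c - m) a : ℚ)) /
      (∏ m ∈ Finset.Icc 1 b, (Nat.choose (a + b - m) a : ℚ)) =
    ∏ i ∈ Finset.Icc 1 a, ∏ j ∈ Finset.Icc 1 b, ∏ k ∈ Finset.Icc 1 c,
      (((i : ℚ) + j + k - 1) / ((i : ℚ) + j + k - 2)) := by
  have hden : (∏ m ∈ Icc 1 b, (Nat.choose (a + b - m) a : ℚ)) ≠ 0 := by
    rw [Finset.prod_ne_zero_iff]
    intro m hm
    have hm2 : m ≤ b := (mem_Icc.mp hm).2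
    exact_mod_cast (Nat.choose_pos (by omega : a ≤ a + b - m)).ne'
  induction c with
  | zero => simpa using div_self hden
  | succ c ih =>
    have hnum : ∏ m ∈ Icc 1 b, (Nat.choose (a + b + (c+1) - m) a : ℚ) =
        (∏ m ∈ Icc 1 b, (Nat.choose (a + b + c - m) a : ℚ)) *
          ∏ m ∈ Icc 1 b, (((a:ℚ) + b + c - m + 1) / ((b:ℚ) + c - m + 1)) := by
      rw [← Finset.prod_mul_distrib]
      apply Finset.prod_congr rfl
      intro m hm
      obtain ⟨hm1, hm2⟩ := mem_Icc.mp hm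
      set n := a + b + c - m with hn
      have hme : a + b + (c+1) - m = n + 1 := by omega
      have han : a ≤ n := by omega
      rw [hme]
      have key := Nat.choose_mul_succ_eq n a
      have key' : ((Nat.choose n a : ℚ)) * ((n:ℚ) + 1)
          = ((Nat.choose (n+1) a : ℚ)) * ((n:ℚ) + 1 - a) := by
        have h := congrArg (Nat.cast : ℕ → ℚ) key
        push_cast [Nat.cast_sub (by omega : a ≤ n + 1)] at h
        convert h using 2 <;> push_cast <;> ring
      have hnq : ((n:ℚ)) = (a:ℚ) + b + c - m := by
        rw [hn, Nat.cast_sub (by omega : m ≤ a + b + c)]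
        push_cast; ring
      have h1 : ((b:ℚ) + c - m + 1) ≠ 0 := by
        have hmb : (m:ℚ) ≤ b := by exact_mod_cast hm2
        have : (0:ℚ) ≤ c := Nat.cast_nonneg c
        linarith
      rw [← mul_div_assoc, eq_div_iff h1]
      linear_combination ((Nat.choose n a : ℚ) - (Nat.choose (n+1) a : ℚ)) * hnq - key'
    have hrhs : (∏ i ∈ Icc 1 a, ∏ j ∈ Icc 1 b, ∏ k ∈ Icc 1 (c+1),
          (((i : ℚ) + j + k - 1) / ((i : ℚ) + j + k - 2)))
        = (∏ i ∈ Icc 1 a, ∏ j ∈ Icc 1 b, ∏ k ∈ Icc 1 c,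
            (((i : ℚ) + j + k - 1) / ((i : ℚ) + j + k - 2))) *
          ∏ i ∈ Icc 1 a, ∏ j ∈ Icc 1 b, (((i:ℚ) + j + c) / ((i:ℚ) + j + c - 1)) := by
      rw [← Finset.prod_mul_distrib]
      apply Finset.prod_congr rfl
      intro i _
      rw [← Finset.prod_mul_distrib]
      apply Finset.prod_congr rfl
      intro j _
      rw [Finset.prod_Icc_succ_top (by omega)]
      congr 1
      push_cast
      ring_nf
    rw [hnum, mul_div_right_comm, ih, hrhs, step_prod a b c ha hb]

/-- The ratio of products of binomial coefficients appearing in MacMahon's formula equals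
the triple product form, for positive `a`, `b`, `c` and `n = a + b + c`. -/
theorem binomial_quotient_eq_triple_product (a b c : ℕ)
    (ha : 0 < a) (hb : 0 < b) (hc : 0 < c) :
    (∏ m ∈ Finset.Icc 1 b, (Nat.choose (a + b + c - m) a : ℚ)) /
      (∏ m ∈ Finset.Icc 1 b, (Nat.choose (a + b - m) a : ℚ)) =
    ∏ i ∈ Finset.Icc 1 a, ∏ j ∈ Finset.Icc 1 b, ∏ k ∈ Finset.Icc 1 c,
      (((i : ℚ) + j + k - 1) / ((i : ℚ) + j + k - 2)) := by
  exact aux_main a b ha hb c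
end

section
/- For positive integers a, b, c, the expression H(a+b+c)·H(a)·H(b)·H(c) / (H(a+b)·H(b+c)·H(c+a)) is a positive integer. -/
/-!
By Legendre's formula, the exponent of a prime `p` in `H(n) = ∏_{j<n} j!` is
`∑_{i ≥ 1} F_{p^i}(n)` with `F_q(n) = ∑_{j<n} ⌊j/q⌋`, so it suffices that each `F_q` satisfies
`F(a+b) + F(b+c) + F(c+a) ≤ F(a+b+c) + F(a) + F(b) + F(c)`.
Since `F(n + q) = F(n) + n` and these linear terms cancel, the inequality is invariant under
shifting any of `a`, `b`, `c` by `q`; for `a, b, c < q` it is a finite check on the closed form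
`F(n) = (n - q)₊ + (n - 2q)₊`, valid for `n ≤ 3q`.
-/

open Finset

def floorSum (q n : ℕ) : ℕ := ∑ j ∈ range n, j / q

def PairwiseSumsLe (f : ℕ → ℕ) (a b c : ℕ) : Prop :=
  f (a + b) + f (b + c) + f (c + a) ≤ f (a + b + c) + f a + f b + f c

theorem PairwiseSumsLe.rotate {f : ℕ → ℕ} {a b c : ℕ} (h : PairwiseSumsLe f a b c) :
    PairwiseSumsLe f b c a := by
  unfold PairwiseSumsLe at *
  rw [show b + c + a = a + b + c by ring]
  omega

section floorSum

variable {q : ℕ}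

theorem floorSum_add_self (hq : 0 < q) (n : ℕ) : floorSum q (n + q) = floorSum q n + n := by
  have hq_zero : floorSum q q = 0 := sum_eq_zero fun j hj => Nat.div_eq_of_lt (mem_range.mp hj)
  rw [add_comm, floorSum, sum_range_add, ← floorSum, hq_zero, zero_add]
  simp only [add_comm q, Nat.add_div_right _ hq, sum_add_distrib, floorSum, sum_const, card_range,
    smul_eq_mul, mul_one]

theorem floorSum_of_le_three_mul {n : ℕ} (hn : n ≤ 3 * q) :
    floorSum q n = (n - q) + (n - 2 * q) := by
  induction n with
  | zero => simp [floorSum]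
  | succ n ih =>
    rw [floorSum, sum_range_succ, ← floorSum, ih (by omega)]
    have hq : 0 < q := by omega
    have h1 := Nat.div_mul_le_self n q
    have h2 := Nat.lt_mul_div_succ n hq
    have h3 : n / q < 3 := Nat.div_lt_of_lt_mul (by omega)
    interval_cases n / q <;> omega

theorem pairwiseSumsLe_floorSum_of_lt {a b c : ℕ} (ha : a < q) (hb : b < q) (hc : c < q) :
    PairwiseSumsLe (floorSum q) a b c := by
  unfold PairwiseSumsLe
  simp (disch := omega) only [floorSum_of_le_three_mul (q := q)]
  omega

theorem PairwiseSumsLe.floorSum_add_self (hq : 0 < q) {a b c : ℕ}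
    (h : PairwiseSumsLe (floorSum q) a b c) : PairwiseSumsLe (floorSum q) (a + q) b c := by
  unfold PairwiseSumsLe at *
  rw [show a + q + b + c = a + b + c + q by ring, show a + q + b = a + b + q by ring,
    show c + (a + q) = c + a + q by ring]
  simp only [_root_.floorSum_add_self hq]
  omega

theorem PairwiseSumsLe.floorSum_add_mul (hq : 0 < q) {a b c : ℕ}
    (h : PairwiseSumsLe (floorSum q) a b c) (k : ℕ) :
    PairwiseSumsLe (floorSum q) (a + q * k) b c := by
  induction k with
  | zero => simpa using h
  | succ k ih => simpa only [mul_add_one, ← add_assoc] using ih.floorSum_add_self hq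

theorem pairwiseSumsLe_floorSum (hq : 0 < q) (a b c : ℕ) : PairwiseSumsLe (floorSum q) a b c := by
  have h := pairwiseSumsLe_floorSum_of_lt (Nat.mod_lt a hq) (Nat.mod_lt b hq) (Nat.mod_lt c hq)
  replace h := ((h.floorSum_add_mul hq (a / q)).rotate.floorSum_add_mul hq (b / q)).rotate
  replace h := (h.floorSum_add_mul hq (c / q)).rotate
  simpa only [Nat.mod_add_div] using h

end floorSum

theorem hyperfactorial_ne_zero (n : ℕ) : hyperfactorial n ≠ 0 :=
  prod_ne_zero_iff.mpr fun j _ => j.factorial_ne_zero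

theorem factorization_hyperfactorial {p n B : ℕ} (hp : p.Prime) (hn : n < B) :
    (hyperfactorial n).factorization p = ∑ i ∈ Ico 1 B, floorSum (p ^ i) n := by
  rw [hyperfactorial, Nat.factorization_prod fun j _ => j.factorial_ne_zero,
    Finsupp.finsetSum_apply, sum_congr rfl fun j hj => Nat.factorization_factorial hp
    ((Nat.log_le_self p j).trans_lt ((mem_range.mp hj).trans hn)), sum_comm]
  rfl

theorem hyperfactorial_pairwise_dvd (a b c : ℕ) :
    hyperfactorial (a + b) * hyperfactorial (b + c) * hyperfactorial (c + a) ∣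
      hyperfactorial (a + b + c) * hyperfactorial a * hyperfactorial b * hyperfactorial c := by
  rw [← Nat.factorization_prime_le_iff_dvd (by simp [hyperfactorial_ne_zero])
    (by simp [hyperfactorial_ne_zero])]
  intro p hp
  simp only [Nat.factorization_mul, hyperfactorial_ne_zero, ne_eq, mul_eq_zero, or_self,
    not_false_eq_true, Finsupp.add_apply]
  simp (disch := omega) only [factorization_hyperfactorial hp (B := a + b + c + 1),
    ← sum_add_distrib]
  exact sum_le_sum fun i _ => pairwiseSumsLe_floorSum (pow_pos hp.pos i) a b c

theorem hyperfactorial_quotient_is_positive_integer_general (a b c : ℕ) :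
    ∃ m : ℕ, 0 < m ∧
      hyperfactorial (a + b + c) * hyperfactorial a * hyperfactorial b * hyperfactorial c =
        hyperfactorial (a + b) * hyperfactorial (b + c) * hyperfactorial (c + a) * m := by
  obtain ⟨m, hm⟩ := hyperfactorial_pairwise_dvd a b c
  refine ⟨m, Nat.pos_of_ne_zero ?_, hm⟩
  rintro rfl
  simp [hyperfactorial_ne_zero] at hm

/-- For positive `a`, `b`, `c`, the quantity
`H(a+b+c)·H(a)·H(b)·H(c) / (H(a+b)·H(b+c)·H(c+a))` is a positive integer:
the denominator divides the numerator in `ℕ`, with positive quotient. -/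
theorem hyperfactorial_quotient_is_positive_integer (a b c : ℕ)
    (ha : 0 < a) (hb : 0 < b) (hc : 0 < c) :
    ∃ m : ℕ, 0 < m ∧
      hyperfactorial (a + b + c) * hyperfactorial a * hyperfactorial b * hyperfactorial c =
        hyperfactorial (a + b) * hyperfactorial (b + c) * hyperfactorial (c + a) * m :=
  hyperfactorial_quotient_is_positive_integer_general a b c
end

section
/- In a fully packed loop configuration on the n×n grid with boundary conditions of type (A,B,C) (three bundles of a, b, c nested arches), exactly one of the three centers A, B, C has the property that its 45-degree cone contains the other two centers, and this distinguished center is never located at a corner of the grid. -/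
/-! A stub at offset `r` on its side has in its cone exactly the stubs whose counterclockwise
distance `d` along the perimeter satisfies `2n ≤ d + 2r + 1 ≤ 4n`. The other two centers lie at
distances `2(a+b)` and `2n + 2b` from `A`, so `A` is distinguished iff its offset lies in
`[c, c + a)`, and cyclically for `B` and `C`. Modulo `n` the offsets of `B` and `C` are those of
`A` shifted by `-2c` and `-2(a+c)`, so the three conditions place the offset of `A` in one of the
consecutive arcs `[c - b, c)`, `[c, c + a)`, `[c + a, 2c + a)`, which partition `ℤ/n`. Since
`b, c > 0`, the arc `[c, c + a)` avoids the corner offsets `0` and `n - 1`; cyclically for `B`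
and `C`. -/

/-- The outer endpoint (stub) of the `k`-th external edge of the `n × n` grid, where the `4n`
external edges are enumerated counterclockwise: bottom side, right side, top side, left side.
The grid vertices occupy `[0,n) × [0,n)`. -/
def stub (n k : ℕ) : ℤ × ℤ :=
  if k < n then ((k : ℤ), -1)
  else if k < 2 * n then ((n : ℤ), (k : ℤ) - n)
  else if k < 3 * n then (3 * (n : ℤ) - 1 - k, (n : ℤ))
  else (-1, 4 * (n : ℤ) - 1 - k)

/-- The inner endpoint (grid vertex) of the external edge with stub `P`. -/
def innerPt (n : ℕ) (P : ℤ × ℤ) : ℤ × ℤ :=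
  (if P.1 = -1 then 0 else if P.1 = (n : ℤ) then (n : ℤ) - 1 else P.1,
   if P.2 = -1 then 0 else if P.2 = (n : ℤ) then (n : ℤ) - 1 else P.2)

/-- `Q` lies in the cone of the boundary point `P`: the region between the two diagonal rays
of slope `±1` emanating inward from the inner endpoint of `P` (the side on which `P` sits
determines the inward direction). -/
def InCone (n : ℕ) (P Q : ℤ × ℤ) : Prop :=
  (P.2 = -1 ∧ (innerPt n Q).2 - (innerPt n P).2 ≥ |(innerPt n Q).1 - (innerPt n P).1|) ∨
  (P.2 = (n : ℤ) ∧ (innerPt n P).2 - (innerPt n Q).2 ≥ |(innerPt n Q).1 - (innerPt n P).1|) ∨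
  (P.1 = -1 ∧ (innerPt n Q).1 - (innerPt n P).1 ≥ |(innerPt n Q).2 - (innerPt n P).2|) ∨
  (P.1 = (n : ℤ) ∧ (innerPt n P).1 - (innerPt n Q).1 ≥ |(innerPt n Q).2 - (innerPt n P).2|)

/-- The external edge with index `k` sits in a corner of the grid: it is the first or the last
external edge on its side. -/
def IsCornerIdx (n k : ℕ) : Prop := k % n = 0 ∨ k % n = n - 1

lemma eq_add_mod_of_lt_four_mul {n x : ℕ} (hx : x < 4 * n) :
    x = x % n ∨ x = n + x % n ∨ x = 2 * n + x % n ∨ x = 3 * n + x % n := by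
  have hx' := Nat.div_add_mod x n
  have : x / n < 4 := Nat.div_lt_of_lt_mul (by linarith)
  interval_cases x / n <;> omega

lemma add_mod_eq_or {N k d : ℕ} (hk : k < N) (hd : d < N) :
    (k + d) % N = k + d ∨ (k + d) % N + N = k + d := by
  rw [Nat.add_mod_eq_ite, Nat.mod_eq_of_lt hk, Nat.mod_eq_of_lt hd]
  split_ifs <;> omega

lemma add_mod_ne_self {N k d : ℕ} (hk : k < N) (hd₀ : 0 < d) (hd : d < N) :
    (k + d) % N ≠ k := by
  rcases add_mod_eq_or hk hd with h | h <;> omega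

lemma mod_add_mod_of_dvd {n N x y d : ℕ} (hnN : n ∣ N) (hy : y = (x + d) % N) :
    y % n = (x % n + d) % n := by
  rw [hy, Nat.mod_mod_of_dvd _ hnN, Nat.mod_add_mod]

lemma add_mod_cycle {N x y z d e f : ℕ} (hx : x < N) (hy : y = (x + d) % N)
    (hz : z = (y + e) % N) (hdef : d + e + f = N) : x = (z + f) % N := by
  rw [hz, hy, Nat.mod_add_mod, add_assoc, Nat.mod_add_mod, add_assoc, ← add_assoc d, hdef,
    Nat.add_mod_right, Nat.mod_eq_of_lt hx]

section Perimeter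

variable {n r : ℕ}

lemma stub_bottom (hr : r < n) : stub n r = ((r : ℤ), -1) := by
  simp [stub, hr]

lemma stub_right (hr : r < n) : stub n (n + r) = ((n : ℤ), (r : ℤ)) := by
  rw [stub, if_neg (by omega), if_pos (by omega)]
  push_cast; ring_nf

lemma stub_top (hr : r < n) : stub n (2 * n + r) = ((n : ℤ) - 1 - r, (n : ℤ)) := by
  rw [stub, if_neg (by omega), if_neg (by omega), if_pos (by omega)]
  push_cast; ring_nf

lemma stub_left : stub n (3 * n + r) = (-1, (n : ℤ) - 1 - r) := by
  rw [stub, if_neg (by omega), if_neg (by omega), if_neg (by omega)]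
  push_cast; ring_nf

lemma innerPt_stub_bottom (hr : r < n) : innerPt n (stub n r) = ((r : ℤ), 0) := by
  rw [stub_bottom hr, innerPt]
  simp only [Int.reduceNeg, reduceCtorEq, ↓reduceIte, Nat.cast_inj, Prod.mk.injEq,
    ite_eq_right_iff, and_true]
  omega

lemma innerPt_stub_right (hr : r < n) :
    innerPt n (stub n (n + r)) = ((n : ℤ) - 1, (r : ℤ)) := by
  rw [stub_right hr, innerPt]
  simp only [Int.reduceNeg, reduceCtorEq, ↓reduceIte, Nat.cast_inj, Prod.mk.injEq,
    ite_eq_right_iff, true_and]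
  omega

lemma innerPt_stub_top (hr : r < n) :
    innerPt n (stub n (2 * n + r)) = ((n : ℤ) - 1 - r, (n : ℤ) - 1) := by
  rw [stub_top hr, innerPt]
  simp only [Int.reduceNeg, reduceCtorEq, ↓reduceIte, Prod.mk.injEq, and_true]
  omega

lemma innerPt_stub_left (hr : r < n) : innerPt n (stub n (3 * n + r)) = (0, (n : ℤ) - 1 - r) := by
  rw [stub_left, innerPt]
  simp only [Int.reduceNeg, ↓reduceIte, Prod.mk.injEq, true_and]
  omega

lemma inCone_stub_bottom_iff (hr : r < n) (Q : ℤ × ℤ) :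
    InCone n (stub n r) Q ↔ |(innerPt n Q).1 - r| ≤ (innerPt n Q).2 := by
  rw [InCone, innerPt_stub_bottom hr, stub_bottom hr]
  simp only [abs_le, true_and]
  omega

lemma inCone_stub_right_iff (hr : r < n) (Q : ℤ × ℤ) :
    InCone n (stub n (n + r)) Q ↔ |(innerPt n Q).2 - r| ≤ n - 1 - (innerPt n Q).1 := by
  rw [InCone, innerPt_stub_right hr, stub_right hr]
  simp only [abs_le, true_and]
  omega

lemma inCone_stub_top_iff (hr : r < n) (Q : ℤ × ℤ) :
    InCone n (stub n (2 * n + r)) Q ↔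
      |(innerPt n Q).1 - (n - 1 - r)| ≤ n - 1 - (innerPt n Q).2 := by
  rw [InCone, innerPt_stub_top hr, stub_top hr]
  simp only [abs_le, true_and]
  omega

lemma inCone_stub_left_iff (hr : r < n) (Q : ℤ × ℤ) :
    InCone n (stub n (3 * n + r)) Q ↔ |(innerPt n Q).2 - (n - 1 - r)| ≤ (innerPt n Q).1 := by
  rw [InCone, innerPt_stub_left hr, stub_left]
  simp only [abs_le, true_and]
  omega

end Perimeter

lemma inCone_stub_add_iff {n k d : ℕ} (hk : k < 4 * n) (hd₀ : 0 < d) (hd : d < 4 * n) :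
    InCone n (stub n k) (stub n ((k + d) % (4 * n))) ↔
      2 * n ≤ d + 2 * (k % n) + 1 ∧ d + 2 * (k % n) < 4 * n := by
  have hm : (k + d) % (4 * n) < 4 * n := Nat.mod_lt _ (by omega)
  have hkm := add_mod_eq_or hk hd
  have hr : k % n < n := Nat.mod_lt _ (by omega)
  have hr' : (k + d) % (4 * n) % n < n := Nat.mod_lt _ (by omega)
  have hk_side := eq_add_mod_of_lt_four_mul hk
  have hm_side := eq_add_mod_of_lt_four_mul hm
  generalize (k + d) % (4 * n) = m at hm hkm hr' hm_side
  generalize k % n = r at hr hk_side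
  generalize m % n = r' at hr' hm_side
  rcases hk_side with rfl | rfl | rfl | rfl <;>
    simp only [inCone_stub_bottom_iff, inCone_stub_right_iff, inCone_stub_top_iff,
      inCone_stub_left_iff, hr] <;>
    rcases hm_side with rfl | rfl | rfl | rfl <;>
    simp only [innerPt_stub_bottom, innerPt_stub_right, innerPt_stub_top, innerPt_stub_left,
      hr', abs_le] <;>
    omega

def IsConeCenter (n : ℕ) (S : Set ℕ) (k : ℕ) : Prop :=
  k ∈ S ∧ ∀ m ∈ S, m ≠ k → InCone n (stub n k) (stub n m)

lemma isConeCenter_triple_iff {n x y z : ℕ} (hy : y ≠ x) (hz : z ≠ x) :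
    IsConeCenter n {x, y, z} x ↔
      InCone n (stub n x) (stub n y) ∧ InCone n (stub n x) (stub n z) := by
  simp [IsConeCenter, hy, hz]

lemma isConeCenter_iff {a b c n α β γ : ℕ} (hn : n = a + b + c) (ha : 0 < a) (hα : α < 4 * n)
    (hβ : β = (α + 2 * (a + b)) % (4 * n)) (hγ : γ = (β + 2 * (b + c)) % (4 * n)) :
    IsConeCenter n {α, β, γ} α ↔ c ≤ α % n ∧ α % n < c + a := by
  have hγ' : γ = (α + (2 * n + 2 * b)) % (4 * n) := by
    rw [hγ, hβ, Nat.mod_add_mod, add_assoc]; congr 2; omega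
  rw [isConeCenter_triple_iff (hβ ▸ add_mod_ne_self hα (by omega) (by omega))
    (hγ' ▸ add_mod_ne_self hα (by omega) (by omega)), hβ, hγ',
    inCone_stub_add_iff hα (by omega) (by omega), inCone_stub_add_iff hα (by omega) (by omega)]
  omega

lemma exactly_one_arc {n a b c ra rb rc : ℕ} (hn : n = a + b + c) (hra : ra < n)
    (hrb : rb = (ra + 2 * (a + b)) % n) (hrc : rc = (rb + 2 * (b + c)) % n) :
    (c ≤ ra ∧ ra < c + a) ∧ ¬(a ≤ rb ∧ rb < a + b) ∧ ¬(b ≤ rc ∧ rc < b + c) ∨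
    ¬(c ≤ ra ∧ ra < c + a) ∧ (a ≤ rb ∧ rb < a + b) ∧ ¬(b ≤ rc ∧ rc < b + c) ∨
    ¬(c ≤ ra ∧ ra < c + a) ∧ ¬(a ≤ rb ∧ rb < a + b) ∧ (b ≤ rc ∧ rc < b + c) := by
  have hrb' : rb < n := hrb ▸ Nat.mod_lt _ (by omega)
  have hrc' : rc < n := hrc ▸ Nat.mod_lt _ (by omega)
  have hb := eq_add_mod_of_lt_four_mul (n := n) (x := ra + 2 * (a + b)) (by omega)
  have hc := eq_add_mod_of_lt_four_mul (n := n) (x := rb + 2 * (b + c)) (by omega)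
  rw [← hrb] at hb
  rw [← hrc] at hc
  omega

lemma existsUnique_of_exactly_one {ι : Type*} {P : ι → Prop} {x y z : ι}
    (hP : ∀ k, P k → k = x ∨ k = y ∨ k = z)
    (h : P x ∧ ¬P y ∧ ¬P z ∨ ¬P x ∧ P y ∧ ¬P z ∨ ¬P x ∧ ¬P y ∧ P z) :
    ∃! k, P k := by
  rcases h with ⟨hx, hy, hz⟩ | ⟨hx, hy, hz⟩ | ⟨hx, hy, hz⟩
  · exact ⟨x, hx, fun k hk => by rcases hP k hk with rfl | rfl | rfl <;> tauto⟩
  · exact ⟨y, hy, fun k hk => by rcases hP k hk with rfl | rfl | rfl <;> tauto⟩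
  · exact ⟨z, hz, fun k hk => by rcases hP k hk with rfl | rfl | rfl <;> tauto⟩

/-- For an FPL of type `(A,B,C)` with three bundles of `a`, `b`, `c` nested arches
(`n = a+b+c`), the centers `A = stub n α`, `B = stub n β`, `C = stub n γ` are unoccupied
external edges at cyclic spacings `2(a+b)`, `2(b+c)`, `2(c+a)` along the perimeter.  Exactly
one of the three centers has the property that its cone contains the two others, and this
distinguished center is never in a corner. -/
theorem exists_unique_cone_center (a b c n : ℕ) (hn : n = a + b + c)
    (ha : 0 < a) (hb : 0 < b) (hc : 0 < c)
    (α β γ : ℕ) (hα : α < 4 * n) (hβ : β < 4 * n) (hγ : γ < 4 * n)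
    (hAB : β % (4 * n) = (α + 2 * (a + b)) % (4 * n))
    (hBC : γ % (4 * n) = (β + 2 * (b + c)) % (4 * n)) :
    (∃! k, k ∈ ({α, β, γ} : Set ℕ) ∧
        ∀ m ∈ ({α, β, γ} : Set ℕ), m ≠ k → InCone n (stub n k) (stub n m)) ∧
      ∀ k, (k ∈ ({α, β, γ} : Set ℕ) ∧
          ∀ m ∈ ({α, β, γ} : Set ℕ), m ≠ k → InCone n (stub n k) (stub n m)) →
        ¬ IsCornerIdx n k := by
  change (∃! k, IsConeCenter n {α, β, γ} k) ∧
    ∀ k, IsConeCenter n {α, β, γ} k → ¬IsCornerIdx n k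
  rw [Nat.mod_eq_of_lt hβ] at hAB
  rw [Nat.mod_eq_of_lt hγ] at hBC
  have hCA : α = (γ + 2 * (c + a)) % (4 * n) := add_mod_cycle hα hAB hBC (by omega)
  have hA := isConeCenter_iff hn ha hα hAB hBC
  have hB : IsConeCenter n {α, β, γ} β ↔ a ≤ β % n ∧ β % n < a + b := by
    rw [Set.insert_comm, Set.pair_comm]
    exact isConeCenter_iff (by omega) hb hβ hBC hCA
  have hC : IsConeCenter n {α, β, γ} γ ↔ b ≤ γ % n ∧ γ % n < b + c := by
    rw [Set.pair_comm, Set.insert_comm]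
    exact isConeCenter_iff (by omega) hc hγ hCA hAB
  have key := exactly_one_arc hn (Nat.mod_lt α (by omega))
    (mod_add_mod_of_dvd (dvd_mul_left n 4) hAB) (mod_add_mod_of_dvd (dvd_mul_left n 4) hBC)
  rw [← hA, ← hB, ← hC] at key
  refine ⟨existsUnique_of_exactly_one (fun k hk => hk.1) key, fun k hk => ?_⟩
  unfold IsCornerIdx
  rcases hk.1 with rfl | rfl | rfl
  · have := hA.1 hk; omega
  · have := hB.1 hk; omega
  · have := hC.1 hk; omega
end
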